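/- arXiv:2101.01833 — 4 statements merged into one kernel-verified Lean document; each statement's English description precedes it below -/
import Mathlib

section
/- Let d ≥ 1 be an integer, let γ₁,…,γ_d, b, β be complex numbers with b ≠ 0 and β ≠ 0, and let A ∈ ℂ satisfy 1 + b·exp(β·A) = 0. Let U ⊆ ℂ^d be an open neighborhood of 0 and let ψ : ℂ^d → ℂ be analytic on U with ψ(0) = A, such that 1 + b·exp(β·ψ(a)) + Σ_{i=1}^d a_i·exp(γ_i·ψ(a)) = 0 for all a = (a₁,…,a_d) ∈ U. Set φ(a) = exp(ψ(a)), so φ(0) = α := exp(A) and φ(a) is a zero of the complex-exponent polynomial f(z) = 1 + b z^β + Σ_{i=1}^d a_i z^{γ_i}, the powers being taken on the sheet determined by ψ. Then for every multi-index n = (n₁,…,n_d) of non-negative integers with N := n₁+⋯+n_d ≥ 1, the iterated partial derivative (∂/∂a₁)^{n₁}⋯(∂/∂a_d)^{n_d} φ evaluated at a = 0 equals −( exp(A·(1 + Σ_{i=1}^d n_i(γ_i − 1))) / (b·β·exp(A·(β−1)))^{N} ) · ∏_{i=1}^{N−1} ( −1 + i·β − Σ_{j=1}^d n_j γ_j ).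 -/
/-!
Differentiating the defining equation of `ψ` in `a_i` and eliminating `b e^{βψ}` with the equation
itself gives, for every `ν`,
`β e^{νψ} ∂_iψ = e^{(ν+γ_i)ψ} + ∑_j (γ_j - β) a_j e^{(ν+γ_j)ψ} ∂_iψ`.
Applying `∂^m` at `a = 0`, where `∂^m (a_j f) = m_j ∂^{m-e_j} f`, turns this into a recursion in
`|m|` for the numbers `∂^m (e^{νψ} ∂_iψ)(0)`, and `∂^{m+e_k} e^{μψ} = μ ∂^m (e^{μψ} ∂_kψ)`. The
recursion is solved by `derivCoeff β A (ν + γ_i + ∑_j m_j γ_j) |m|`, and the theorem is the case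
`μ = 1`.
-/

/-- The partial derivative of `f : (Fin d → ℂ) → ℂ` in the `i`-th coordinate direction. -/
noncomputable def pd {d : ℕ} (i : Fin d) (f : (Fin d → ℂ) → ℂ) : (Fin d → ℂ) → ℂ :=
  fun x => fderiv ℂ f x (Pi.single i 1)

/-- The iterated partial derivative `(∂/∂a₁)^{n₁} ⋯ (∂/∂a_d)^{n_d} f`. -/
noncomputable def iterPD {d : ℕ} (n : Fin d → ℕ) (f : (Fin d → ℂ) → ℂ) : (Fin d → ℂ) → ℂ :=
  (List.finRange d).foldr (fun i g => (pd i)^[n i] g) f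

open Complex Finset
open Set (EqOn)

section MultiIndex

variable {d : ℕ}

lemma sum_add_single (m : Fin d → ℕ) (k : Fin d) :
    ∑ j, (m + Pi.single k 1 : Fin d → ℕ) j = ∑ j, m j + 1 := by
  simp [Finset.sum_add_distrib]

lemma sub_single_add_single {m : Fin d → ℕ} {k : Fin d} (hk : m k ≠ 0) :
    m - Pi.single k 1 + Pi.single k 1 = m := by
  ext l
  by_cases hl : l = k
  · subst hl; simp; omega
  · simp [hl]

lemma add_single_sub_single_of_ne (m : Fin d → ℕ) {j k : Fin d} (hjk : j ≠ k) :
    m + Pi.single k 1 - Pi.single j 1 = m - Pi.single j 1 + Pi.single k 1 := by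
  ext l
  by_cases hl : l = k
  · subst hl; simp [hjk.symm]
  · by_cases hlj : l = j
    · subst hlj; simp [hl]
    · simp [hl, hlj]

lemma exists_eq_add_single_of_ne_zero {n : Fin d → ℕ} (hn : n ≠ 0) :
    ∃ (m : Fin d → ℕ) (k : Fin d), (∀ l, k < l → m l = 0) ∧ n = m + Pi.single k 1 := by
  have hS : (univ.filter fun l => n l ≠ 0).Nonempty := by
    obtain ⟨l, hl⟩ := Function.ne_iff.mp hn
    exact ⟨l, by simpa using hl⟩
  set k := (univ.filter fun l => n l ≠ 0).max' hS
  have hk : n k ≠ 0 := (mem_filter.mp (max'_mem _ hS)).2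
  refine ⟨n - Pi.single k 1, k, fun l hl => ?_, (sub_single_add_single hk).symm⟩
  have : n l = 0 := by
    by_contra h
    exact absurd (le_max' _ l (by simpa using h)) (not_le.mpr hl)
  simp [this]

/-- Peels off the largest coordinate, the one `iterPD` differentiates in first
(`iterPD_add_single`), so that partial derivatives never have to be commuted. -/
theorem multiIndex_induction {P : (Fin d → ℕ) → Prop} (zero : P 0)
    (add_single : ∀ m k, (∀ l, k < l → m l = 0) → P m → P (m + Pi.single k 1))
    (n : Fin d → ℕ) : P n := by
  induction h : ∑ j, n j generalizing n with
  | zero =>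
    obtain rfl : n = 0 := funext fun j => by simpa using sum_eq_zero_iff.mp h j (mem_univ j)
    exact zero
  | succ N ih =>
    obtain ⟨m, k, htop, rfl⟩ := exists_eq_add_single_of_ne_zero (n := n) (by rintro rfl; simp at h)
    exact add_single m k htop (ih m (by rw [sum_add_single] at h; omega))

end MultiIndex

section IterPD

variable {d : ℕ}

lemma foldr_iterate_pd_of_forall_eq_zero {n : Fin d → ℕ} {l : List (Fin d)}
    (h : ∀ i ∈ l, n i = 0) (f : (Fin d → ℂ) → ℂ) :
    l.foldr (fun i g => (pd i)^[n i] g) f = f := by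
  induction l with
  | nil => rfl
  | cons a t ih => simp_all

lemma foldr_iterate_pd_add_single {n : Fin d → ℕ} {k : Fin d} {l : List (Fin d)}
    (hl : l.Pairwise (· < ·)) (hk : k ∈ l) (htop : ∀ i ∈ l, k < i → n i = 0)
    (f : (Fin d → ℂ) → ℂ) :
    l.foldr (fun i g => (pd i)^[(n + Pi.single k 1 : Fin d → ℕ) i] g) f
      = l.foldr (fun i g => (pd i)^[n i] g) (pd k f) := by
  induction l with
  | nil => simp at hk
  | cons a t ih =>
    obtain ⟨ha, ht⟩ := List.pairwise_cons.mp hl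
    rcases List.mem_cons.mp hk with rfl | hkt
    · have hzero : ∀ i ∈ t, n i = 0 := fun i hi => htop i (by simp [hi]) (ha i hi)
      have hzero' : ∀ i ∈ t, (n + Pi.single k 1 : Fin d → ℕ) i = 0 := fun i hi => by
        simp [hzero i hi, (ha i hi).ne']
      rw [List.foldr_cons, List.foldr_cons, foldr_iterate_pd_of_forall_eq_zero hzero,
        foldr_iterate_pd_of_forall_eq_zero hzero', Pi.add_apply, Pi.single_eq_same,
        Function.iterate_succ_apply]
    · have hak : a ≠ k := (ha k hkt).ne
      rw [List.foldr_cons, List.foldr_cons,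
        ih ht hkt fun i hi => htop i (List.mem_cons_of_mem a hi),
        Pi.add_apply, Pi.single_eq_of_ne hak, add_zero]

lemma iterPD_zero (f : (Fin d → ℂ) → ℂ) : iterPD 0 f = f :=
  foldr_iterate_pd_of_forall_eq_zero (fun _ _ => rfl) f

lemma iterPD_add_single {n : Fin d → ℕ} {k : Fin d} (htop : ∀ l, k < l → n l = 0)
    (f : (Fin d → ℂ) → ℂ) : iterPD (n + Pi.single k 1) f = iterPD n (pd k f) :=
  foldr_iterate_pd_add_single (List.pairwise_lt_finRange d) (List.mem_finRange k)
    (fun i _ => htop i) f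

end IterPD

section PartialDerivatives

variable {d : ℕ} {U : Set (Fin d → ℂ)} {f g : (Fin d → ℂ) → ℂ}

@[fun_prop]
lemma analyticAt_apply (j : Fin d) (x : Fin d → ℂ) : AnalyticAt ℂ (fun y : Fin d → ℂ => y j) x :=
  (ContinuousLinearMap.proj (R := ℂ) (φ := fun _ : Fin d => ℂ) j).analyticAt x

lemma pd_congr (hU : IsOpen U) (h : EqOn f g U) (i : Fin d) : EqOn (pd i f) (pd i g) U :=
  fun x hx => by simp only [pd, (Filter.eventuallyEq_of_mem (hU.mem_nhds hx) h).fderiv_eq]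

lemma AnalyticOnNhd.pd (hf : AnalyticOnNhd ℂ f U) (i : Fin d) : AnalyticOnNhd ℂ (pd i f) U :=
  (ContinuousLinearMap.apply ℂ ℂ (Pi.single i 1 : Fin d → ℂ)).comp_analyticOnNhd hf.fderiv

lemma pd_const (c : ℂ) (i : Fin d) : pd i (fun _ => c) = 0 := by
  ext x
  simp [pd]

lemma pd_add (hf : AnalyticOnNhd ℂ f U) (hg : AnalyticOnNhd ℂ g U) (i : Fin d) :
    EqOn (pd i fun x => f x + g x) (fun x => pd i f x + pd i g x) U := fun x hx => by
  simp only [pd, fderiv_fun_add (hf x hx).differentiableAt (hg x hx).differentiableAt,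
    add_apply]

lemma pd_sum {ι : Type*} (s : Finset ι) {F : ι → (Fin d → ℂ) → ℂ}
    (hF : ∀ j ∈ s, AnalyticOnNhd ℂ (F j) U) (i : Fin d) :
    EqOn (pd i fun x => ∑ j ∈ s, F j x) (fun x => ∑ j ∈ s, pd i (F j) x) U := fun x hx => by
  simp only [pd, fderiv_fun_sum fun j hj => (hF j hj x hx).differentiableAt,
    _root_.sum_apply]

lemma pd_const_mul (hf : AnalyticOnNhd ℂ f U) (c : ℂ) (i : Fin d) :
    EqOn (pd i fun x => c * f x) (fun x => c * pd i f x) U := fun x hx => by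
  simp only [pd, fderiv_const_mul (hf x hx).differentiableAt c, smul_apply,
    smul_eq_mul]

lemma pd_coord_mul (hf : AnalyticOnNhd ℂ f U) (i j : Fin d) :
    EqOn (pd i fun x => x j * f x)
      (fun x => (Pi.single i 1 : Fin d → ℂ) j * f x + x j * pd i f x) U := fun x hx => by
  have hcoord : HasFDerivAt (fun y : Fin d → ℂ => y j) (ContinuousLinearMap.proj j) x :=
    (ContinuousLinearMap.proj (R := ℂ) (φ := fun _ : Fin d => ℂ) j).hasFDerivAt
  simp only [pd, fderiv_fun_mul hcoord.differentiableAt (hf x hx).differentiableAt,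
    hcoord.fderiv, add_apply, smul_apply,
    ContinuousLinearMap.proj_apply, Pi.single_apply, smul_eq_mul]
  by_cases hij : i = j
  · subst hij; simp; ring
  · simp [Ne.symm hij]

lemma pd_cexp_const_mul (hf : AnalyticOnNhd ℂ f U) (μ : ℂ) (i : Fin d) :
    EqOn (pd i fun x => exp (μ * f x)) (fun x => μ * (exp (μ * f x) * pd i f x)) U :=
  fun x hx => by
  simp only [pd, (((hf x hx).differentiableAt.hasFDerivAt.const_mul μ).cexp).fderiv,
    smul_apply, smul_eq_mul]
  ring

end PartialDerivatives

section IteratedPartialDerivatives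

variable {d : ℕ} {U : Set (Fin d → ℂ)} {f g : (Fin d → ℂ) → ℂ}

lemma iterPD_congr (hU : IsOpen U) (h : EqOn f g U) (n : Fin d → ℕ) :
    EqOn (iterPD n f) (iterPD n g) U := by
  induction n using multiIndex_induction generalizing f g with
  | zero => simpa only [iterPD_zero]
  | add_single m k htop ih => simp only [iterPD_add_single htop]; exact ih (pd_congr hU h k)

lemma iterPD_add (hU : IsOpen U) (hf : AnalyticOnNhd ℂ f U) (hg : AnalyticOnNhd ℂ g U)
    (n : Fin d → ℕ) :
    EqOn (iterPD n fun x => f x + g x) (fun x => iterPD n f x + iterPD n g x) U := by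
  induction n using multiIndex_induction generalizing f g with
  | zero => simp [iterPD_zero, EqOn]
  | add_single m k htop ih =>
    simp only [iterPD_add_single htop]
    exact (iterPD_congr hU (pd_add hf hg k) m).trans (ih (hf.pd k) (hg.pd k))

lemma iterPD_sum (hU : IsOpen U) {ι : Type*} (s : Finset ι) {F : ι → (Fin d → ℂ) → ℂ}
    (hF : ∀ j ∈ s, AnalyticOnNhd ℂ (F j) U) (n : Fin d → ℕ) :
    EqOn (iterPD n fun x => ∑ j ∈ s, F j x) (fun x => ∑ j ∈ s, iterPD n (F j) x) U := by
  induction n using multiIndex_induction generalizing F with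
  | zero => simp [iterPD_zero, EqOn]
  | add_single m k htop ih =>
    simp only [iterPD_add_single htop]
    exact (iterPD_congr hU (pd_sum s hF k) m).trans (ih fun j hj => (hF j hj).pd k)

lemma iterPD_const_mul (hU : IsOpen U) (hf : AnalyticOnNhd ℂ f U) (c : ℂ) (n : Fin d → ℕ) :
    EqOn (iterPD n fun x => c * f x) (fun x => c * iterPD n f x) U := by
  induction n using multiIndex_induction generalizing f with
  | zero => simp [iterPD_zero, EqOn]
  | add_single m k htop ih =>
    simp only [iterPD_add_single htop]
    exact (iterPD_congr hU (pd_const_mul hf c k) m).trans (ih (hf.pd k))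

lemma iterPD_coord_mul (hU : IsOpen U) (hf : AnalyticOnNhd ℂ f U) (j : Fin d) (n : Fin d → ℕ) :
    EqOn (iterPD n fun x => x j * f x)
      (fun x => x j * iterPD n f x + n j * iterPD (n - Pi.single j 1) f x) U := by
  induction n using multiIndex_induction generalizing f with
  | zero => simp [iterPD_zero, EqOn]
  | add_single m k htop ih =>
    intro x hx
    have hcoord_mul : AnalyticOnNhd ℂ (fun x => x j * pd k f x) U := fun x hx => by
      have := hf.pd k x hx; fun_prop
    rw [iterPD_add_single htop, iterPD_congr hU (pd_coord_mul hf k j) m hx,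
      iterPD_add hU (analyticOnNhd_const.mul hf) hcoord_mul m hx]
    dsimp only
    rw [iterPD_const_mul hU hf _ m hx, ih (hf.pd k) hx, ← iterPD_add_single htop]
    by_cases hkj : k = j
    · subst hkj
      have hpeel : (m k : ℂ) * iterPD (m - Pi.single k 1) (pd k f) x = m k * iterPD m f x := by
        rcases eq_or_ne (m k) 0 with hmk | hmk
        · simp [hmk]
        · rw [← iterPD_add_single (fun l hl => by simp [htop l hl, hl.ne']),
            sub_single_add_single hmk]
      simp only [Pi.single_eq_same, Pi.add_apply, add_tsub_cancel_right, hpeel]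
      push_cast
      ring
    · have htop' : ∀ l, k < l → (m - Pi.single j 1 : Fin d → ℕ) l = 0 := fun l hl => by
        simp [htop l hl]
      rw [add_single_sub_single_of_ne m (Ne.symm hkj), iterPD_add_single htop']
      simp [Pi.single_eq_of_ne (Ne.symm hkj)]

end IteratedPartialDerivatives

section ExponentPolynomialZero

variable {d : ℕ} {U : Set (Fin d → ℂ)} {γ : Fin d → ℂ} {b β A : ℂ} {ψ : (Fin d → ℂ) → ℂ}

lemma sum_add_single_mul (γ : Fin d → ℂ) (m : Fin d → ℕ) (k : Fin d) :
    ∑ j, ((m + Pi.single k 1 : Fin d → ℕ) j : ℂ) * γ j = ∑ j, (m j : ℂ) * γ j + γ k := by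
  simp [add_mul, sum_add_distrib, Pi.single_apply]

noncomputable def derivCoeff (β A t : ℂ) (N : ℕ) : ℂ :=
  exp (t * A) / β ^ (N + 1) * ∏ k ∈ range N, (t - (k + 1) * β)

lemma derivCoeff_succ (β A t : ℂ) (N : ℕ) :
    derivCoeff β A t (N + 1) = derivCoeff β A t N * (t - (N + 1) * β) / β := by
  simp only [derivCoeff, prod_range_succ, pow_succ]
  ring

lemma pd_implicit_eq_zero (hU : IsOpen U) (hψ : AnalyticOnNhd ℂ ψ U)
    (heq : ∀ a ∈ U, 1 + b * exp (β * ψ a) + ∑ j, a j * exp (γ j * ψ a) = 0) (i : Fin d)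
    {x : Fin d → ℂ} (hx : x ∈ U) :
    (b * β * exp (β * ψ x) + ∑ j, x j * (γ j * exp (γ j * ψ x))) * pd i ψ x
      + exp (γ i * ψ x) = 0 := by
  have hexp : ∀ μ, AnalyticOnNhd ℂ (fun a => exp (μ * ψ a)) U := fun μ a ha => by
    have := hψ a ha; fun_prop
  have hterm : ∀ j ∈ univ, AnalyticOnNhd ℂ (fun a => a j * exp (γ j * ψ a)) U :=
    fun j _ a ha => by have := hψ a ha; fun_prop
  have hconst : AnalyticOnNhd ℂ (fun a => 1 + b * exp (β * ψ a)) U := fun a ha => by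
    have := hψ a ha; fun_prop
  have hsum : AnalyticOnNhd ℂ (fun a => ∑ j, a j * exp (γ j * ψ a)) U := fun a ha => by
    have := hψ a ha; fun_prop
  have hterm_pd : ∀ j, pd i (fun a => a j * exp (γ j * ψ a)) x
      = (Pi.single i 1 : Fin d → ℂ) j * exp (γ j * ψ x)
        + x j * (γ j * exp (γ j * ψ x)) * pd i ψ x := by
    intro j
    rw [pd_coord_mul (hexp (γ j)) i j hx]
    dsimp only
    rw [pd_cexp_const_mul hψ (γ j) i hx]
    ring
  have h0 := pd_congr (g := fun _ => 0) hU (fun a ha => heq a ha) i hx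
  simp only [pd_add hconst hsum i hx,
    pd_add (f := fun _ => 1) analyticOnNhd_const (analyticOnNhd_const.mul (hexp β)) i hx,
    pd_const_mul (hexp β) b i hx, pd_cexp_const_mul hψ β i hx, pd_sum univ hterm i hx,
    hterm_pd, pd_const, Pi.zero_apply, sum_add_distrib, Pi.single_apply, ite_mul, one_mul,
    zero_mul, sum_ite_eq', mem_univ, if_true, zero_add] at h0
  rw [add_mul, sum_mul]
  linear_combination h0

lemma beta_mul_cexp_mul_pd_eqOn (hU : IsOpen U) (hψ : AnalyticOnNhd ℂ ψ U)
    (heq : ∀ a ∈ U, 1 + b * exp (β * ψ a) + ∑ j, a j * exp (γ j * ψ a) = 0) (ν : ℂ) (i : Fin d) :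
    EqOn (fun x => β * (exp (ν * ψ x) * pd i ψ x))
      (fun x => exp ((ν + γ i) * ψ x)
        + ∑ j, (γ j - β) * (x j * (exp ((ν + γ j) * ψ x) * pd i ψ x))) U := fun x hx => by
  have hsum : ∑ j, (γ j - β) * (x j * (exp ((ν + γ j) * ψ x) * pd i ψ x))
      = exp (ν * ψ x) * pd i ψ x
        * (∑ j, x j * (γ j * exp (γ j * ψ x)) - β * ∑ j, x j * exp (γ j * ψ x)) := by
    rw [mul_sub, mul_sum, mul_sum, mul_sum, ← sum_sub_distrib]
    refine sum_congr rfl fun j _ => ?_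
    rw [add_mul, exp_add]
    ring
  dsimp only
  rw [hsum, add_mul, exp_add]
  linear_combination (exp (ν * ψ x) * β * pd i ψ x) * heq x hx
    - exp (ν * ψ x) * pd_implicit_eq_zero hU hψ heq i hx

lemma iterPD_cexp_mul_add_single (hU : IsOpen U) (hψ : AnalyticOnNhd ℂ ψ U) {m : Fin d → ℕ}
    {k : Fin d} (htop : ∀ l, k < l → m l = 0) (μ : ℂ) :
    EqOn (iterPD (m + Pi.single k 1) fun x => exp (μ * ψ x))
      (fun x => μ * iterPD m (fun x => exp (μ * ψ x) * pd k ψ x) x) U := by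
  have hK : AnalyticOnNhd ℂ (fun x => exp (μ * ψ x) * pd k ψ x) U := fun x hx => by
    have := hψ x hx; have := hψ.pd k x hx; fun_prop
  rw [iterPD_add_single htop]
  exact (iterPD_congr hU (pd_cexp_const_mul hψ μ k) m).trans (iterPD_const_mul hU hK μ m)

lemma iterPD_cexp_mul_pd_recurrence (hU : IsOpen U) (hU0 : 0 ∈ U) (hψ : AnalyticOnNhd ℂ ψ U)
    (heq : ∀ a ∈ U, 1 + b * exp (β * ψ a) + ∑ j, a j * exp (γ j * ψ a) = 0) (ν : ℂ) (i : Fin d)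
    (m : Fin d → ℕ) :
    β * iterPD m (fun x => exp (ν * ψ x) * pd i ψ x) 0
      = iterPD m (fun x => exp ((ν + γ i) * ψ x)) 0
        + ∑ j, (γ j - β) * (m j * iterPD (m - Pi.single j 1)
            (fun x => exp ((ν + γ j) * ψ x) * pd i ψ x) 0) := by
  have hK : ∀ μ, AnalyticOnNhd ℂ (fun x => exp (μ * ψ x) * pd i ψ x) U := fun μ x hx => by
    have := hψ x hx; have := hψ.pd i x hx; fun_prop
  have hG : AnalyticOnNhd ℂ (fun x => exp ((ν + γ i) * ψ x)) U := fun x hx => by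
    have := hψ x hx; fun_prop
  have hterm : ∀ j ∈ univ, AnalyticOnNhd ℂ
      (fun x => (γ j - β) * (x j * (exp ((ν + γ j) * ψ x) * pd i ψ x))) U :=
    fun j _ x hx => by have := hK (ν + γ j) x hx; fun_prop
  calc β * iterPD m (fun x => exp (ν * ψ x) * pd i ψ x) 0
      = iterPD m (fun x => β * (exp (ν * ψ x) * pd i ψ x)) 0 :=
        (iterPD_const_mul hU (hK ν) β m hU0).symm
    _ = iterPD m (fun x => exp ((ν + γ i) * ψ x)
          + ∑ j, (γ j - β) * (x j * (exp ((ν + γ j) * ψ x) * pd i ψ x))) 0 :=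
        iterPD_congr hU (beta_mul_cexp_mul_pd_eqOn hU hψ heq ν i) m hU0
    _ = _ := by
      simp only [iterPD_add hU hG (Finset.analyticOnNhd_fun_sum _ hterm) m hU0,
        iterPD_sum hU univ hterm m hU0]
      refine congrArg _ (sum_congr rfl fun j _ => ?_)
      have hcoord : AnalyticOnNhd ℂ (fun x => x j * (exp ((ν + γ j) * ψ x) * pd i ψ x)) U :=
        fun x hx => by have := hK (ν + γ j) x hx; fun_prop
      simp only [iterPD_const_mul hU hcoord _ m hU0, iterPD_coord_mul hU (hK _) j m hU0,
        Pi.zero_apply, zero_mul, zero_add]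

theorem iterPD_cexp_mul_pd_at_zero (hU : IsOpen U) (hU0 : 0 ∈ U) (hψ : AnalyticOnNhd ℂ ψ U)
    (hψ0 : ψ 0 = A)
    (heq : ∀ a ∈ U, 1 + b * exp (β * ψ a) + ∑ j, a j * exp (γ j * ψ a) = 0)
    (hβ : β ≠ 0) (m : Fin d → ℕ) (ν : ℂ) (i : Fin d) :
    iterPD m (fun x => exp (ν * ψ x) * pd i ψ x) 0
      = derivCoeff β A (ν + γ i + ∑ j, (m j : ℂ) * γ j) (∑ j, m j) := by
  induction hM : ∑ j, m j generalizing m ν i with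
  | zero =>
    obtain rfl : m = 0 := funext fun j => by simpa using sum_eq_zero_iff.mp hM j (mem_univ j)
    have hrec := iterPD_cexp_mul_pd_recurrence hU hU0 hψ heq ν i 0
    simp only [iterPD_zero, Pi.zero_apply, Nat.cast_zero, zero_mul, mul_zero, sum_const_zero,
      add_zero, hψ0] at hrec
    simp only [iterPD_zero, derivCoeff, Pi.zero_apply, Nat.cast_zero, zero_mul, sum_const_zero,
      add_zero, zero_add, pow_one, range_zero, prod_empty, mul_one, hψ0]
    rw [eq_div_iff hβ]
    linear_combination hrec
  | succ M ih =>
    set T := ν + γ i + ∑ j, (m j : ℂ) * γ j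
    have hlower : ∀ j, m j ≠ 0 →
        iterPD (m - Pi.single j 1) (fun x => exp ((ν + γ j) * ψ x) * pd i ψ x) 0
          = derivCoeff β A T M := by
      intro j hj
      have hm := sub_single_add_single hj
      rw [← hm, sum_add_single] at hM
      rw [ih _ _ _ (by omega)]
      congr 1
      simp only [T]
      conv_rhs => rw [← hm, sum_add_single_mul]
      ring
    have hG : iterPD m (fun x => exp ((ν + γ i) * ψ x)) 0 = (ν + γ i) * derivCoeff β A T M := by
      obtain ⟨m', k, htop, rfl⟩ := exists_eq_add_single_of_ne_zero (n := m) (by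
        rintro rfl; simp at hM)
      rw [sum_add_single] at hM
      rw [iterPD_cexp_mul_add_single hU hψ htop _ hU0]
      dsimp only
      rw [ih m' _ k (by omega)]
      simp only [T, sum_add_single_mul]
      ring_nf
    have hsum : ∑ j, (γ j - β) * (m j * iterPD (m - Pi.single j 1)
          (fun x => exp ((ν + γ j) * ψ x) * pd i ψ x) 0)
        = (∑ j, (m j : ℂ) * γ j - β * (M + 1)) * derivCoeff β A T M := by
      have hMc : ∑ j, (m j : ℂ) = M + 1 := by exact_mod_cast hM
      rw [← hMc, mul_sum, sub_mul, sum_mul, sum_mul, ← sum_sub_distrib]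
      refine sum_congr rfl fun j _ => ?_
      rcases eq_or_ne (m j) 0 with hj | hj
      · simp [hj]
      · rw [hlower j hj]
        ring
    have hrec := iterPD_cexp_mul_pd_recurrence hU hU0 hψ heq ν i m
    rw [hG, hsum] at hrec
    rw [derivCoeff_succ, eq_div_iff hβ]
    linear_combination hrec

lemma derivCoeff_one_add_eq (hA : 1 + b * exp (β * A) = 0) (hβ : β ≠ 0) (s : ℂ) (N : ℕ) :
    derivCoeff β A (1 + s) N
      = -(exp (A * (1 + (s - (N + 1 : ℕ)))) / (b * β * exp (A * (β - 1))) ^ (N + 1))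
        * ∏ i ∈ range N, (-1 + ((i : ℂ) + 1) * β - s) := by
  have hden : b * β * exp (A * (β - 1)) = -β * exp (-A) := by
    rw [show A * (β - 1) = β * A + -A by ring, exp_add]
    linear_combination β * exp (-A) * hA
  have hnum : exp (A * (1 + (s - (N + 1 : ℕ)))) = exp ((1 + s) * A) * exp (-A) ^ (N + 1) := by
    rw [← exp_nat_mul, ← exp_add]
    push_cast
    ring_nf
  have hprod : ∏ i ∈ range N, (-1 + ((i : ℂ) + 1) * β - s)
      = (-1) ^ N * ∏ i ∈ range N, (1 + s - ((i : ℂ) + 1) * β) := by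
    have h := prod_neg (s := range N) fun i : ℕ => 1 + s - ((i : ℂ) + 1) * β
    rw [card_range] at h
    rw [← h]
    exact prod_congr rfl fun i _ => by ring
  rw [hden, hnum, hprod, derivCoeff, neg_mul, mul_pow, neg_pow]
  generalize ∏ i ∈ range N, (1 + s - ((i : ℂ) + 1) * β) = P
  field_simp
  ring

end ExponentPolynomialZero

theorem stmt0_general (d : ℕ) (γ : Fin d → ℂ) (b β A : ℂ)
    (hβ : β ≠ 0)
    (hA : 1 + b * Complex.exp (β * A) = 0)
    (U : Set (Fin d → ℂ)) (hU : IsOpen U) (hU0 : (0 : Fin d → ℂ) ∈ U)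
    (ψ : (Fin d → ℂ) → ℂ) (hψ : AnalyticOn ℂ ψ U) (hψ0 : ψ 0 = A)
    (heq : ∀ a ∈ U, 1 + b * Complex.exp (β * ψ a)
      + ∑ i, a i * Complex.exp (γ i * ψ a) = 0)
    (n : Fin d → ℕ) (hn : 1 ≤ ∑ i, n i) :
    iterPD n (fun a => Complex.exp (ψ a)) 0 =
      -(Complex.exp (A * (1 + ∑ i, (n i : ℂ) * (γ i - 1))) /
          (b * β * Complex.exp (A * (β - 1))) ^ (∑ i, n i)) *
        ∏ i ∈ Finset.range (∑ i, n i - 1),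
          (-1 + ((i : ℂ) + 1) * β - ∑ j, (n j : ℂ) * γ j) := by
  replace hψ := hU.analyticOn_iff_analyticOnNhd.mp hψ
  have hweight : ∑ i, (n i : ℂ) * (γ i - 1) = ∑ i, (n i : ℂ) * γ i - (∑ i, n i : ℕ) := by
    simp [mul_sub, sum_sub_distrib]
  obtain ⟨m, k, htop, rfl⟩ := exists_eq_add_single_of_ne_zero (n := n) (by rintro rfl; simp at hn)
  have hexp : iterPD (m + Pi.single k 1) (fun a => exp (ψ a)) 0
      = iterPD m (fun x => exp (1 * ψ x) * pd k ψ x) 0 := by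
    simpa only [one_mul] using iterPD_cexp_mul_add_single hU hψ htop 1 hU0
  rw [hexp, iterPD_cexp_mul_pd_at_zero hU hU0 hψ hψ0 heq hβ, hweight, sum_add_single,
    sum_add_single_mul, Nat.add_sub_cancel, add_assoc, add_comm (γ k)]
  exact derivCoeff_one_add_eq hA hβ _ _

theorem stmt0 (d : ℕ) (hd : 1 ≤ d) (γ : Fin d → ℂ) (b β A : ℂ)
    (hb : b ≠ 0) (hβ : β ≠ 0)
    (hA : 1 + b * Complex.exp (β * A) = 0)
    (U : Set (Fin d → ℂ)) (hU : IsOpen U) (hU0 : (0 : Fin d → ℂ) ∈ U)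
    (ψ : (Fin d → ℂ) → ℂ) (hψ : AnalyticOn ℂ ψ U) (hψ0 : ψ 0 = A)
    (heq : ∀ a ∈ U, 1 + b * Complex.exp (β * ψ a)
      + ∑ i, a i * Complex.exp (γ i * ψ a) = 0)
    (n : Fin d → ℕ) (hn : 1 ≤ ∑ i, n i) :
    iterPD n (fun a => Complex.exp (ψ a)) 0 =
      -(Complex.exp (A * (1 + ∑ i, (n i : ℂ) * (γ i - 1))) /
          (b * β * Complex.exp (A * (β - 1))) ^ (∑ i, n i)) *
        ∏ i ∈ Finset.range (∑ i, n i - 1),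
          (-1 + ((i : ℂ) + 1) * β - ∑ j, (n j : ℂ) * γ j) :=
  stmt0_general d γ b β A hβ hA U hU hU0 ψ hψ hψ0 heq n hn
end

section
/- Let N ≥ 1 and 1 ≤ k ≤ N be integers. In the polynomial ring ℤ[ν, x₁, …, x_N], the following identity holds: Σ_{r=0}^{k−1} (−1)^{k−1−r} · C(k−1, r) · ( (r+1)·ν − 1 + Σ_{i=1}^N x_i )_{N−1} = (k−1)! · ν^{k−1} · Σ_{s ∈ S(N,k)} ∏_{B ∈ s} ( ν − 1 + Σ_{m ∈ B} x_m )_{|B|−1}, where the outer sum on the right runs over all set partitions s of {1,…,N} into k parts and the product runs over the parts B of s. -/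
/-!
Write `g_A(u) = u · (u - 1 + x_A)_{|A| - 1}` for `A ≠ ∅` and `g_∅ = 1` (`abelFall x A u`). Since
`g_A(u + 1) - g_A(u) = ∑_{a ∈ A} g_{A \ a}(u + x_a)`, induction on `T` shows that over `ℤ` the
defect of the convolution identity `∑_{A ⊆ T} g_A(u) g_{T \ A}(v) = g_T(u + v)` depends only on
`u + v`, and it vanishes at `v = 0`. Consequently the forward difference of `j ↦ g_T(jν)` is
`∑_{∅ ≠ A ⊆ T} g_A(ν) g_{T \ A}(jν)`, and `k` differences at `j = 0` split off `k` ordered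
non-empty blocks: `Δ^k g_T(jν)|_{j=0} = k! ∑_P ∏_{B ∈ P} g_B(ν)` over the partitions `P` of `T`
into `k` blocks. Written as an alternating binomial sum, with `k C(k-1, r) = (r+1) C(k, r+1)`,
this is the identity multiplied by `kν`; it holds at all integer points, hence in the polynomial
ring, where `kν` cancels.
-/

/-- The falling factorial `(p)_k = ∏_{i=1}^k (p - i + 1)` in a commutative ring. -/
def fall {R : Type*} [CommRing R] (p : R) (k : ℕ) : R :=
  ∏ i ∈ Finset.range k, (p - (i : R))

/-- `P` is a set partition of `{1,…,N}` (here `Fin N`) into `k` non-empty parts. -/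
def IsPartitionInto {N : ℕ} (P : Finset (Finset (Fin N))) (k : ℕ) : Prop :=
  (∀ B ∈ P, B.Nonempty) ∧ (∀ B ∈ P, ∀ C ∈ P, B ≠ C → Disjoint B C) ∧
    P.sup id = Finset.univ ∧ P.card = k

instance {N : ℕ} (k : ℕ) : DecidablePred (fun P : Finset (Finset (Fin N)) => IsPartitionInto P k) :=
  fun P => by unfold IsPartitionInto; infer_instance

namespace AbelPartition

open Finset
open scoped fwdDiff Nat

section Fall

variable {R : Type*} [CommRing R]

theorem fall_eq_descPochhammer_eval (p : R) (n : ℕ) : fall p n = (descPochhammer R n).eval p :=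
  (descPochhammer_eval_eq_prod_range n p).symm

theorem fall_succ (p : R) (n : ℕ) : fall p (n + 1) = fall p n * (p - n) := by
  simp only [fall_eq_descPochhammer_eval, descPochhammer_succ_eval]

theorem fall_succ' (p : R) (n : ℕ) : fall p (n + 1) = p * fall (p - 1) n := by
  simp [fall_eq_descPochhammer_eval, descPochhammer_succ_left, Polynomial.eval_comp]

theorem map_fall {S : Type*} [CommRing S] (f : R →+* S) (p : R) (n : ℕ) :
    f (fall p n) = fall (f p) n := by
  simp [fall, map_prod]

end Fall

section SumSwap

variable {ι M : Type*} [DecidableEq ι] [AddCommMonoid M]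

theorem sum_powerset_sum_mem (T : Finset ι) (f : Finset ι → ι → M) :
    ∑ A ∈ T.powerset, ∑ c ∈ A, f A c =
      ∑ c ∈ T, ∑ B ∈ (T.erase c).powerset, f (insert c B) c := by
  rw [sum_comm' (t' := T) (s' := fun c => T.powerset.filter (c ∈ ·))
    (fun A c => by
      simp only [mem_powerset, mem_filter]
      exact ⟨fun ⟨hAT, hc⟩ => ⟨⟨hAT, hc⟩, hAT hc⟩, fun ⟨h, _⟩ => h⟩)]
  refine sum_congr rfl fun c hc => ?_
  have h := sum_powerset_insert (notMem_erase c T) (fun A => if c ∈ A then f A c else 0)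
  rw [insert_erase hc] at h
  rw [sum_filter, h, sum_eq_zero fun B hB => if_neg fun hcB => notMem_erase c T
    (mem_powerset.mp hB hcB), zero_add]
  exact sum_congr rfl fun B _ => if_pos (mem_insert_self c B)

theorem sum_powerset_sum_sdiff (T : Finset ι) (g : Finset ι → ι → M) :
    ∑ A ∈ T.powerset, ∑ c ∈ T \ A, g A c =
      ∑ c ∈ T, ∑ B ∈ (T.erase c).powerset, g B c := by
  rw [sum_comm' (t' := T) (s' := fun c => T.powerset.filter (c ∉ ·))
    (fun A c => by simp only [mem_powerset, mem_filter, mem_sdiff]; tauto)]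
  refine sum_congr rfl fun c hc => ?_
  have h := sum_powerset_insert (notMem_erase c T) (fun A => if c ∉ A then g A c else 0)
  rw [insert_erase hc] at h
  rw [sum_filter, h, sum_eq_zero fun B _ => if_neg (not_not.mpr (mem_insert_self c B)),
    add_zero]
  exact sum_congr rfl fun B hB => if_pos fun hcB => notMem_erase c T (mem_powerset.mp hB hcB)

end SumSwap

theorem eq_apply_add_zero_of_shift {α : Type*} (D : ℤ → ℤ → α)
    (hD : ∀ a b, D (a + 1) b = D a (b + 1)) (a b : ℤ) : D a b = D (a + b) 0 := by
  induction b generalizing a with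
  | zero => simp
  | succ b ih => rw [← hD, ih]; congr 1; ring
  | pred b ih =>
    have h := hD (a - 1) (-b - 1)
    rw [sub_add_cancel, sub_add_cancel] at h
    rw [h, ih]
    congr 1
    ring

section AbelFall

variable {ι R : Type*} [CommRing R]

def abelFall (x : ι → R) (A : Finset ι) (u : R) : R :=
  if A.Nonempty then u * fall (u - 1 + ∑ m ∈ A, x m) (A.card - 1) else 1

@[simp]
theorem abelFall_empty (x : ι → R) (u : R) : abelFall x ∅ u = 1 := by simp [abelFall]

theorem abelFall_of_nonempty (x : ι → R) {A : Finset ι} (hA : A.Nonempty) (u : R) :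
    abelFall x A u = u * fall (u - 1 + ∑ m ∈ A, x m) (A.card - 1) := if_pos hA

theorem abelFall_zero [DecidableEq ι] (x : ι → R) (A : Finset ι) :
    abelFall x A 0 = if A = ∅ then 1 else 0 := by
  rcases A.eq_empty_or_nonempty with rfl | hA
  · simp
  · simp [abelFall_of_nonempty x hA, hA.ne_empty, fall]

theorem abelFall_add_one [DecidableEq ι] (x : ι → R) (A : Finset ι) (u : R) :
    abelFall x A (u + 1) = abelFall x A u + ∑ a ∈ A, abelFall x (A.erase a) (u + x a) := by
  rcases A.eq_empty_or_nonempty with rfl | hA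
  · simp
  obtain ⟨n, hn⟩ : ∃ n, A.card = n + 1 := ⟨_, (Nat.succ_pred_eq_of_pos hA.card_pos).symm⟩
  cases n with
  | zero =>
    obtain ⟨a, rfl⟩ := card_eq_one.mp hn
    simp [abelFall, fall]
  | succ n =>
    have erase_term : ∀ a ∈ A, abelFall x (A.erase a) (u + x a) =
        (u + x a) * fall (u - 1 + ∑ m ∈ A, x m) n := by
      intro a ha
      have hcard : (A.erase a).card = n + 1 := by rw [card_erase_of_mem ha, hn]; rfl
      rw [abelFall_of_nonempty x (card_pos.mp (by omega)), hcard, Nat.add_sub_cancel,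
        ← add_sum_erase A x ha]
      ring_nf
    rw [sum_congr rfl erase_term, ← sum_mul, sum_add_distrib, sum_const, hn,
      abelFall_of_nonempty x hA, abelFall_of_nonempty x hA, hn, Nat.add_sub_cancel,
      fall_succ', fall_succ, show u + 1 - 1 + ∑ m ∈ A, x m - 1 = u - 1 + ∑ m ∈ A, x m by ring]
    ring

end AbelFall

section Convolution

variable {ι : Type*} [DecidableEq ι]

theorem sum_powerset_abelFall_add_one_mul {R : Type*} [CommRing R] (x : ι → R) (T : Finset ι)
    (ih : ∀ c ∈ T, ∀ u v : R, ∑ B ∈ (T.erase c).powerset,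
      abelFall x B u * abelFall x (T.erase c \ B) v = abelFall x (T.erase c) (u + v))
    (a b : R) :
    ∑ A ∈ T.powerset, abelFall x A (a + 1) * abelFall x (T \ A) b =
      ∑ A ∈ T.powerset, abelFall x A a * abelFall x (T \ A) (b + 1) := by
  have left : ∑ A ∈ T.powerset, abelFall x A (a + 1) * abelFall x (T \ A) b =
      ∑ A ∈ T.powerset, abelFall x A a * abelFall x (T \ A) b +
        ∑ c ∈ T, abelFall x (T.erase c) (a + x c + b) := by
    simp only [abelFall_add_one x _ a, add_mul, sum_add_distrib, sum_mul]
    rw [sum_powerset_sum_mem T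
      (fun A c => abelFall x (A.erase c) (a + x c) * abelFall x (T \ A) b)]
    refine congrArg _ (sum_congr rfl fun c hc => ?_)
    rw [← ih c hc]
    refine sum_congr rfl fun B hB => ?_
    have hcB : c ∉ B := fun h => notMem_erase c T (mem_powerset.mp hB h)
    rw [erase_insert hcB, sdiff_insert, erase_sdiff_comm]
  have right : ∑ A ∈ T.powerset, abelFall x A a * abelFall x (T \ A) (b + 1) =
      ∑ A ∈ T.powerset, abelFall x A a * abelFall x (T \ A) b +
        ∑ c ∈ T, abelFall x (T.erase c) (a + x c + b) := by
    simp only [abelFall_add_one x _ b, mul_add, sum_add_distrib, mul_sum]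
    rw [sum_powerset_sum_sdiff T
      (fun A c => abelFall x A a * abelFall x ((T \ A).erase c) (b + x c))]
    refine congrArg _ (sum_congr rfl fun c hc => ?_)
    rw [show a + x c + b = a + (b + x c) by ring, ← ih c hc]
    exact sum_congr rfl fun B _ => by rw [erase_sdiff_comm]
  rw [left, right]

theorem sum_powerset_abelFall_mul (x : ι → ℤ) (T : Finset ι) (u v : ℤ) :
    ∑ A ∈ T.powerset, abelFall x A u * abelFall x (T \ A) v = abelFall x T (u + v) := by
  induction T using Finset.strongInduction generalizing u v with
  | _ T ih =>
  set D : ℤ → ℤ → ℤ := fun a b =>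
    ∑ A ∈ T.powerset, abelFall x A a * abelFall x (T \ A) b - abelFall x T (a + b) with hD
  have shift : ∀ a b, D (a + 1) b = D a (b + 1) := fun a b => by
    simp only [hD]
    rw [sum_powerset_abelFall_add_one_mul x T (fun c hc => ih _ (erase_ssubset hc)),
      add_right_comm a 1 b, add_assoc a b 1]
  have base : ∀ a, D a 0 = 0 := by
    intro a
    simp only [hD]
    rw [sum_eq_single_of_mem T (mem_powerset_self T)]
    · simp
    · intro A hA hAT
      rw [abelFall_zero, if_neg, mul_zero]
      exact fun h => hAT (Subset.antisymm (mem_powerset.mp hA) (sdiff_eq_empty_iff_subset.mp h))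
  have hDuv := eq_apply_add_zero_of_shift D shift u v
  rw [base] at hDuv
  simpa only [hD, sub_eq_zero] using hDuv

end Convolution

section Partitions

variable {ι : Type*} [DecidableEq ι]

def partitionsInto (T : Finset ι) (m : ℕ) : Finset (Finset (Finset ι)) :=
  T.powerset.powerset.filter fun P => (∀ B ∈ P, B.Nonempty) ∧
    (∀ B ∈ P, ∀ C ∈ P, B ≠ C → Disjoint B C) ∧ P.sup id = T ∧ P.card = m

theorem mem_partitionsInto {T : Finset ι} {m : ℕ} {P : Finset (Finset ι)} :
    P ∈ partitionsInto T m ↔ (∀ B ∈ P, B.Nonempty) ∧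
      (∀ B ∈ P, ∀ C ∈ P, B ≠ C → Disjoint B C) ∧ P.sup id = T ∧ P.card = m := by
  refine mem_filter.trans (and_iff_right_of_imp fun h => mem_powerset.mpr fun B hB => ?_)
  exact mem_powerset.mpr (h.2.2.1 ▸ le_sup (f := id) hB)

theorem partitionsInto_univ {N : ℕ} (k : ℕ) : partitionsInto (univ : Finset (Fin N)) k =
    univ.filter fun P : Finset (Finset (Fin N)) => IsPartitionInto P k := by
  ext P
  rw [mem_partitionsInto, mem_filter, and_iff_right (mem_univ P)]
  rfl

theorem partitionsInto_zero (T : Finset ι) :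
    partitionsInto T 0 = if T = ∅ then {∅} else ∅ := by
  ext P
  simp only [mem_partitionsInto, card_eq_zero]
  split_ifs with hT <;> constructor
  · rintro ⟨-, -, -, rfl⟩; exact mem_singleton_self _
  · rintro h; rw [mem_singleton.mp h, hT]; simp
  · rintro ⟨-, -, hsup, rfl⟩; exact (hT (by simpa using hsup.symm)).elim
  · simp

theorem insert_mem_partitionsInto {T A : Finset ι} (hAT : A ⊆ T) (hA : A.Nonempty)
    {P : Finset (Finset ι)} {m : ℕ} (hP : P ∈ partitionsInto (T \ A) m) :
    A ∉ P ∧ insert A P ∈ partitionsInto T (m + 1) := by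
  obtain ⟨hne, hdisj, hsup, hcard⟩ := mem_partitionsInto.mp hP
  have hsub : ∀ B ∈ P, B ⊆ T \ A := fun B hB => hsup ▸ le_sup (f := id) hB
  have hAdisj : ∀ B ∈ P, Disjoint A B := fun B hB =>
    disjoint_of_subset_right (hsub B hB) disjoint_sdiff
  have hAP : A ∉ P := fun h => hA.ne_empty (disjoint_self.mp (hAdisj A h))
  refine ⟨hAP, mem_partitionsInto.mpr ⟨?_, ?_, ?_, ?_⟩⟩
  · simpa [hA] using hne
  · simp only [mem_insert]
    rintro B (rfl | hB) C (rfl | hC) hBC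
    exacts [absurd rfl hBC, hAdisj C hC, (hAdisj B hB).symm, hdisj B hB C hC hBC]
  · rw [sup_insert, hsup, id, sup_eq_union, union_sdiff_of_subset hAT]
  · rw [card_insert_of_notMem hAP, hcard]

theorem erase_mem_partitionsInto {T : Finset ι} {P : Finset (Finset ι)} {m : ℕ}
    (hP : P ∈ partitionsInto T (m + 1)) {A : Finset ι} (hA : A ∈ P) :
    P.erase A ∈ partitionsInto (T \ A) m := by
  obtain ⟨hne, hdisj, hsup, hcard⟩ := mem_partitionsInto.mp hP
  refine mem_partitionsInto.mpr ⟨fun B hB => hne B (mem_of_mem_erase hB),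
    fun B hB C hC => hdisj B (mem_of_mem_erase hB) C (mem_of_mem_erase hC), ?_, ?_⟩
  · have hdisjA : Disjoint A ((P.erase A).sup id) := Finset.disjoint_sup_right.mpr
      fun B hB => hdisj A hA B (mem_of_mem_erase hB) (ne_of_mem_erase hB).symm
    have hT : T = A ∪ (P.erase A).sup id := by
      rw [← hsup]
      conv_lhs => rw [← insert_erase hA, sup_insert]
      rfl
    rw [hT, union_sdiff_left, sdiff_eq_self_of_disjoint hdisjA.symm]
  · rw [card_erase_of_mem hA, hcard, Nat.add_sub_cancel]

end Partitions

section PartitionSum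

variable {ι R : Type*} [DecidableEq ι] [CommRing R]

def partitionSum (x : ι → R) (ν : R) (m : ℕ) (T : Finset ι) : R :=
  ∑ P ∈ partitionsInto T m, ∏ B ∈ P, abelFall x B ν

theorem partitionSum_zero (x : ι → R) (ν : R) (T : Finset ι) :
    partitionSum x ν 0 T = if T = ∅ then 1 else 0 := by
  rw [partitionSum, partitionsInto_zero]
  split_ifs <;> simp

theorem partitionSum_eq_pow_mul (x : ι → R) (ν : R) (m : ℕ) (T : Finset ι) :
    partitionSum x ν m T = ν ^ m *
      ∑ P ∈ partitionsInto T m, ∏ B ∈ P, fall (ν - 1 + ∑ i ∈ B, x i) (B.card - 1) := by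
  rw [partitionSum, mul_sum]
  refine sum_congr rfl fun P hP => ?_
  obtain ⟨hne, -, -, hcard⟩ := mem_partitionsInto.mp hP
  rw [prod_congr rfl fun B hB => abelFall_of_nonempty x (hne B hB) ν, prod_mul_distrib,
    prod_const, hcard]

/-- Choosing a block `A` and a partition of the rest is choosing a partition into one more
block together with one of its blocks. -/
theorem sum_abelFall_mul_partitionSum (x : ι → R) (ν : R) (m : ℕ) (T : Finset ι) :
    ∑ A ∈ T.powerset.erase ∅, abelFall x A ν * partitionSum x ν m (T \ A) =
      (m + 1) * partitionSum x ν (m + 1) T := by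
  have hmem : ∀ A ∈ T.powerset.erase ∅, A ⊆ T ∧ A.Nonempty := fun A hA => by
    rw [mem_erase, mem_powerset] at hA
    exact ⟨hA.2, nonempty_iff_ne_empty.mpr hA.1⟩
  calc ∑ A ∈ T.powerset.erase ∅, abelFall x A ν * partitionSum x ν m (T \ A)
      = ∑ A ∈ T.powerset.erase ∅, ∑ P ∈ partitionsInto (T \ A) m,
          ∏ B ∈ insert A P, abelFall x B ν := by
        refine sum_congr rfl fun A hA => ?_
        rw [partitionSum, mul_sum]
        refine sum_congr rfl fun P hP => ?_
        obtain ⟨hAT, hA⟩ := hmem A hA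
        rw [prod_insert (insert_mem_partitionsInto hAT hA hP).1]
    _ = ∑ P ∈ partitionsInto T (m + 1), ∑ _A ∈ P, ∏ B ∈ P, abelFall x B ν := by
        rw [sum_sigma', sum_sigma']
        refine sum_nbij' (fun p => ⟨insert p.1 p.2, p.1⟩) (fun q => ⟨q.2, q.1.erase q.2⟩)
          ?_ ?_ ?_ ?_ fun _ _ => rfl
        · rintro ⟨A, P⟩ h
          rw [mem_sigma] at h
          obtain ⟨hAT, hA⟩ := hmem A h.1
          exact mem_sigma.mpr ⟨(insert_mem_partitionsInto hAT hA h.2).2, mem_insert_self A P⟩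
        · rintro ⟨P, A⟩ h
          rw [mem_sigma] at h
          obtain ⟨hne, -, hsup, -⟩ := mem_partitionsInto.mp h.1
          refine mem_sigma.mpr ⟨mem_erase.mpr ⟨(hne A h.2).ne_empty, ?_⟩,
            erase_mem_partitionsInto h.1 h.2⟩
          exact mem_powerset.mpr (hsup ▸ le_sup (f := id) h.2)
        · rintro ⟨A, P⟩ h
          rw [mem_sigma] at h
          obtain ⟨hAT, hA⟩ := hmem A h.1
          simp [erase_insert (insert_mem_partitionsInto hAT hA h.2).1]
        · rintro ⟨P, A⟩ h
          simp [insert_erase (mem_sigma.mp h).2]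
    _ = (m + 1) * partitionSum x ν (m + 1) T := by
        rw [partitionSum, mul_sum]
        refine sum_congr rfl fun P hP => ?_
        rw [sum_const, (mem_partitionsInto.mp hP).2.2.2, nsmul_eq_mul]
        push_cast
        rfl

end PartitionSum

section ForwardDifference

variable {ι : Type*} [DecidableEq ι]

theorem fwdDiff_abelFall (x : ι → ℤ) (ν : ℤ) (T : Finset ι) :
    Δ_[1] (fun j : ℕ => abelFall x T (j * ν)) =
      ∑ A ∈ T.powerset.erase ∅, abelFall x A ν • fun j : ℕ => abelFall x (T \ A) (j * ν) := by
  funext j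
  rw [fwdDiff, Nat.cast_succ, add_one_mul, add_comm, ← sum_powerset_abelFall_mul,
    ← add_sum_erase _ _ (empty_mem_powerset T)]
  simp

theorem fwdDiff_iter_abelFall_zero (x : ι → ℤ) (ν : ℤ) (k : ℕ) (T : Finset ι) :
    Δ_[1] ^[k] (fun j : ℕ => abelFall x T (j * ν)) 0 = k ! * partitionSum x ν k T := by
  induction k generalizing T with
  | zero => simp [abelFall_zero, partitionSum_zero]
  | succ k ih =>
    rw [Function.iterate_succ_apply, fwdDiff_abelFall, fwdDiff_iter_finsetSum, Finset.sum_apply]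
    simp only [fwdDiff_iter_const_smul, Pi.smul_apply, smul_eq_mul, ih]
    simp only [mul_left_comm _ (k ! : ℤ), ← mul_sum, sum_abelFall_mul_partitionSum,
      Nat.factorial_succ]
    push_cast
    ring

theorem sum_range_alternating_abelFall (x : ι → ℤ) (ν : ℤ) (k : ℕ) (T : Finset ι) :
    ∑ j ∈ range (k + 1), (-1) ^ (k - j) * k.choose j * abelFall x T (j * ν) =
      k ! * partitionSum x ν k T := by
  rw [← fwdDiff_iter_abelFall_zero, fwdDiff_iter_eq_sum_shift]
  simp

theorem sum_range_alternating_fall (x : ι → ℤ) (ν : ℤ) {T : Finset ι} (hT : T.Nonempty)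
    (k : ℕ) :
    ν * (k + 1) * ∑ r ∈ range (k + 1), (-1) ^ (k - r) * k.choose r *
        fall ((r + 1) * ν - 1 + ∑ i ∈ T, x i) (T.card - 1) =
      (k + 1)! * partitionSum x ν (k + 1) T := by
  rw [← sum_range_alternating_abelFall, sum_range_succ' (fun j =>
      (-1 : ℤ) ^ (k + 1 - j) * ((k + 1).choose j : ℤ) * abelFall x T (j * ν)),
    Nat.cast_zero, zero_mul, abelFall_zero, if_neg hT.ne_empty, mul_zero, add_zero, mul_sum]
  refine sum_congr rfl fun r _ => ?_
  have hchoose : ((k + 1 : ℕ) : ℤ) * k.choose r = (k + 1).choose (r + 1) * (r + 1 : ℕ) := by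
    exact_mod_cast Nat.add_one_mul_choose_eq k r
  rw [abelFall_of_nonempty x hT, Nat.add_sub_add_right]
  push_cast at hchoose ⊢
  linear_combination (ν * (-1) ^ (k - r) * fall ((r + 1) * ν - 1 + ∑ i ∈ T, x i) (T.card - 1)) *
    hchoose

end ForwardDifference

end AbelPartition

open AbelPartition

theorem stmt2_general (N k : ℕ) (hN : 1 ≤ N) (hk1 : 1 ≤ k) :
    let ν : MvPolynomial (Fin (N + 1)) ℤ := MvPolynomial.X 0
    let x : Fin N → MvPolynomial (Fin (N + 1)) ℤ := fun i => MvPolynomial.X i.succ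
    ∑ r ∈ Finset.range k,
        (-1 : MvPolynomial (Fin (N + 1)) ℤ) ^ (k - 1 - r) * ((k - 1).choose r : ℤ) •
          fall (((r : MvPolynomial (Fin (N + 1)) ℤ) + 1) * ν - 1 + ∑ i, x i) (N - 1)
      = ((k - 1).factorial : ℤ) • (ν ^ (k - 1) *
          ∑ P ∈ Finset.univ.filter (fun P : Finset (Finset (Fin N)) => IsPartitionInto P k),
            ∏ B ∈ P, fall (ν - 1 + ∑ m ∈ B, x m) (B.card - 1)) := by
  intro ν x
  obtain ⟨k, rfl⟩ := Nat.exists_eq_add_of_le' hk1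
  refine mul_left_cancel₀ (mul_ne_zero (MvPolynomial.X_ne_zero 0) (Nat.cast_add_one_ne_zero k)) ?_
  refine MvPolynomial.funext fun f => ?_
  have key := sum_range_alternating_fall (fun i : Fin N => f i.succ) (f 0)
    (Finset.univ_nonempty_iff.mpr ⟨⟨0, hN⟩⟩) k
  rw [partitionSum_eq_pow_mul, partitionsInto_univ, Finset.card_univ, Fintype.card_fin]
    at key
  simp only [mul_assoc] at key
  simp only [Nat.add_sub_cancel, mul_assoc, map_mul, map_sum, map_pow, map_add, map_sub, map_one,
    map_neg, map_natCast, MvPolynomial.smul_eval, MvPolynomial.eval_X, map_fall, map_prod, ν, x]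
  rw [key, Nat.factorial_succ]
  push_cast
  ring

theorem stmt2 (N k : ℕ) (hN : 1 ≤ N) (hk1 : 1 ≤ k) (hkN : k ≤ N) :
    let ν : MvPolynomial (Fin (N + 1)) ℤ := MvPolynomial.X 0
    let x : Fin N → MvPolynomial (Fin (N + 1)) ℤ := fun i => MvPolynomial.X i.succ
    ∑ r ∈ Finset.range k,
        (-1 : MvPolynomial (Fin (N + 1)) ℤ) ^ (k - 1 - r) * ((k - 1).choose r : ℤ) •
          fall (((r : MvPolynomial (Fin (N + 1)) ℤ) + 1) * ν - 1 + ∑ i, x i) (N - 1)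
      = ((k - 1).factorial : ℤ) • (ν ^ (k - 1) *
          ∑ P ∈ Finset.univ.filter (fun P : Finset (Finset (Fin N)) => IsPartitionInto P k),
            ∏ B ∈ P, fall (ν - 1 + ∑ m ∈ B, x m) (B.card - 1)) :=
  stmt2_general N k hN hk1
end

section
/- Let N ≥ r ≥ 0 be integers. In the polynomial ring ℤ[X,Y], [N ⊢ r]_{X+Y} = Σ_{i=0}^{N−r} X^{i} · C(r+i, i) · [N ⊢ r+i]_{Y}; that is, the coefficient of T^r in ∏_{j=1}^N (T + X + Y − j) ∈ (ℤ[X,Y])[T] equals Σ_{i=0}^{N−r} X^i · C(r+i, i) times the coefficient of T^{r+i} in ∏_{j=1}^N (T + Y − j). -/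
/-!
Substituting `T ↦ T + X` into `∏ⱼ (T + Y - j)` gives `∏ⱼ (T + X + Y - j)`, so the left-hand
side is the `r`-th Taylor coefficient of `∏ⱼ (T + Y - j)` at `X`, namely the `r`-th Hasse derivative
evaluated at `X`. Expanding that Hasse derivative coefficientwise gives the sum, which stops at
`i = N - r` because the product has degree `N`.
-/

open Finset

namespace Polynomial

variable {R : Type*} [CommRing R]

theorem taylor_prod_X_add_C {ι : Type*} (s : Finset ι) (c : ι → R) (a : R) :
    taylor a (∏ j ∈ s, (X + C (c j))) = ∏ j ∈ s, (X + C (a + c j)) := by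
  rw [taylor_apply, prod_comp]
  refine prod_congr rfl fun j _ => ?_
  rw [add_comp, X_comp, C_comp, add_assoc, ← C_add]

theorem natDegree_prod_X_add_C_le {ι : Type*} (s : Finset ι) (c : ι → R) :
    (∏ j ∈ s, (X + C (c j))).natDegree ≤ #s := by
  refine (natDegree_prod_le _ _).trans ?_
  simpa using sum_le_card_nsmul s _ 1 fun j _ =>
    (natDegree_add_C (a := c j)).le.trans natDegree_X_le

theorem coeff_taylor_eq_sum (P : R[X]) (a : R) {N : ℕ} (hP : P.natDegree ≤ N) (r : ℕ) :
    (taylor a P).coeff r =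
      ∑ i ∈ range (N - r + 1), a ^ i * ((r + i).choose i : ℤ) • P.coeff (r + i) := by
  have hdeg : (hasseDeriv r P).natDegree < N - r + 1 := by
    have := natDegree_hasseDeriv_le P r
    omega
  rw [taylor_coeff, eval_eq_sum_range' hdeg]
  refine sum_congr rfl fun i _ => ?_
  rw [hasseDeriv_coeff, add_comm i r, Nat.choose_symm_add, zsmul_eq_mul, Int.cast_natCast]
  ring

end Polynomial

theorem stmt7_general (N r : ℕ) :
    let X : MvPolynomial (Fin 2) ℤ := MvPolynomial.X 0
    let Y : MvPolynomial (Fin 2) ℤ := MvPolynomial.X 1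
    (∏ j ∈ Finset.range N,
        (Polynomial.X + Polynomial.C (X + Y - ((j : MvPolynomial (Fin 2) ℤ) + 1)))).coeff r
      = ∑ i ∈ Finset.range (N - r + 1),
          X ^ i * ((r + i).choose i : ℤ) •
            (∏ j ∈ Finset.range N,
              (Polynomial.X + Polynomial.C (Y - ((j : MvPolynomial (Fin 2) ℤ) + 1)))).coeff (r + i) := by
  intro X Y
  have hshift := Polynomial.taylor_prod_X_add_C (range N)
    (fun j => Y - ((j : MvPolynomial (Fin 2) ℤ) + 1)) X
  simp only [← add_sub_assoc] at hshift
  rw [← hshift]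
  exact Polynomial.coeff_taylor_eq_sum _ X
    ((Polynomial.natDegree_prod_X_add_C_le _ _).trans (card_range N).le) r

theorem stmt7 (N r : ℕ) (hrN : r ≤ N) :
    let X : MvPolynomial (Fin 2) ℤ := MvPolynomial.X 0
    let Y : MvPolynomial (Fin 2) ℤ := MvPolynomial.X 1
    (∏ j ∈ Finset.range N,
        (Polynomial.X + Polynomial.C (X + Y - ((j : MvPolynomial (Fin 2) ℤ) + 1)))).coeff r
      = ∑ i ∈ Finset.range (N - r + 1),
          X ^ i * ((r + i).choose i : ℤ) •
            (∏ j ∈ Finset.range N,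
              (Polynomial.X + Polynomial.C (Y - ((j : MvPolynomial (Fin 2) ℤ) + 1)))).coeff (r + i) :=
  stmt7_general N r
end

section
/- For every integer n ≥ 0, the following identity holds in the ring ℚ[[t]] of formal power series with rational coefficients: ( Σ_{k≥1} t^k / k )^{n} = n! · Σ_{k≥0} ( [k ⊢ n] / k! ) · t^{k}, where [k ⊢ n] is the unsigned Stirling number of the first kind. (Equivalently, (−ln(1−t))^n / n! = Σ_{k≥0} ([k ⊢ n]/k!) t^k.) -/
/-!
Write `L = ∑_{k ≥ 1} X^k / k = -log (1 - X)`. Since `(1 - X) L' = 1`, differentiating `L^(n+1)`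
gives `(1 - X) (L^(n+1))' = (n + 1) L^n`, i.e. a recursion for the coefficients of the powers
of `L`. After rescaling the `k`-th coefficient of `L^n` by `k! / n!` this is exactly the
recursion `[k+1 ⊢ n+1] = k [k ⊢ n+1] + [k ⊢ n]` of the Stirling numbers of the first kind,
with the same initial values.
-/

/-- The unsigned Stirling number of the first kind `[k ⊢ n]`: the coefficient of `Y^n`
in the rising factorial `Y (Y+1) ⋯ (Y+k-1) ∈ ℤ[Y]`. -/
noncomputable def stirling1 (k n : ℕ) : ℤ :=
  (∏ i ∈ Finset.range k, (Polynomial.X + (Polynomial.C (i : ℤ)))).coeff n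

open PowerSeries
open scoped Nat

theorem stirling1_zero_left (n : ℕ) : stirling1 0 n = if n = 0 then 1 else 0 := by
  simp [stirling1, Polynomial.coeff_one]

theorem stirling1_succ_zero (k : ℕ) : stirling1 (k + 1) 0 = 0 := by
  rw [stirling1, Polynomial.coeff_zero_eq_eval_zero, Polynomial.eval_prod]
  exact Finset.prod_eq_zero (Finset.mem_range.2 k.succ_pos) (by simp)

theorem stirling1_succ_succ (k n : ℕ) :
    stirling1 (k + 1) (n + 1) = k * stirling1 k (n + 1) + stirling1 k n := by
  unfold stirling1
  rw [Finset.prod_range_succ, mul_add, Polynomial.coeff_add, Polynomial.coeff_mul_X,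
    Polynomial.coeff_mul_C]
  ring

theorem stirling1_eq_stirlingFirst (k n : ℕ) : stirling1 k n = Nat.stirlingFirst k n := by
  induction k generalizing n with
  | zero => cases n <;> simp [stirling1_zero_left]
  | succ k ih =>
    cases n with
    | zero => simp [stirling1_succ_zero]
    | succ n => simp [stirling1_succ_succ, Nat.stirlingFirst_succ_succ, ih]

section NegLogOneSub

variable (K : Type*) [Field K]

noncomputable def negLogOneSub : K⟦X⟧ := mk fun k => if k = 0 then 0 else (k : K)⁻¹

variable {K} [CharZero K]

theorem derivative_negLogOneSub : d⁄dX K (negLogOneSub K) = mk 1 := by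
  ext k
  rw [coeff_derivative, negLogOneSub, coeff_mk, coeff_mk, if_neg k.succ_ne_zero,
    Pi.one_apply, Nat.cast_succ]
  exact inv_mul_cancel₀ (Nat.cast_add_one_ne_zero (R := K) k)

theorem one_sub_X_mul_derivative_negLogOneSub : (1 - X) * d⁄dX K (negLogOneSub K) = 1 := by
  rw [derivative_negLogOneSub, mul_comm, mk_one_mul_one_sub_eq_one]

theorem one_sub_X_mul_derivative_negLogOneSub_pow (n : ℕ) :
    (1 - X) * d⁄dX K (negLogOneSub K ^ (n + 1)) = (n + 1 : K) • negLogOneSub K ^ n := by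
  rw [Derivation.leibniz_pow, Nat.add_sub_cancel, smul_eq_mul, mul_smul_comm, mul_left_comm,
    one_sub_X_mul_derivative_negLogOneSub, mul_one, ← Nat.cast_smul_eq_nsmul K, Nat.cast_succ]

theorem coeff_succ_negLogOneSub_pow_succ (k n : ℕ) :
    (k + 1 : K) * coeff (k + 1) (negLogOneSub K ^ (n + 1)) =
      k * coeff k (negLogOneSub K ^ (n + 1)) + (n + 1) * coeff k (negLogOneSub K ^ n) := by
  have h := congrArg (coeff k) (one_sub_X_mul_derivative_negLogOneSub_pow (K := K) n)
  rw [sub_mul, one_mul, map_sub, coeff_derivative, coeff_smul, smul_eq_mul] at h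
  cases k with
  | zero => simpa [mul_comm] using h
  | succ k =>
    rw [coeff_succ_X_mul, coeff_derivative] at h
    push_cast at h ⊢
    linear_combination h

theorem factorial_mul_coeff_negLogOneSub_pow (k n : ℕ) :
    (k ! : K) * coeff k (negLogOneSub K ^ n) = n ! * Nat.stirlingFirst k n := by
  induction k generalizing n with
  | zero =>
    have h : constantCoeff (negLogOneSub K) = 0 := by simp [negLogOneSub]
    rw [coeff_zero_eq_constantCoeff_apply, map_pow, h]
    cases n <;> simp
  | succ k ih =>
    cases n with
    | zero => simp [coeff_one]
    | succ n =>
      have h₁ := ih (n + 1)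
      have h₀ := ih n
      push_cast [Nat.factorial_succ, Nat.stirlingFirst_succ_succ] at h₁ ⊢
      linear_combination (k ! : K) * coeff_succ_negLogOneSub_pow_succ (K := K) k n +
        (k : K) * h₁ + ((n : K) + 1) * h₀

end NegLogOneSub

theorem stmt8 (n : ℕ) :
    (PowerSeries.mk fun k => if k = 0 then (0 : ℚ) else ((k : ℚ))⁻¹) ^ n
      = (n.factorial : ℚ) • PowerSeries.mk (fun k => (stirling1 k n : ℚ) / (k.factorial : ℚ)) := by
  ext k
  have hk : (k ! : ℚ) ≠ 0 := Nat.cast_ne_zero.2 k.factorial_ne_zero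
  rw [coeff_smul, coeff_mk, smul_eq_mul, stirling1_eq_stirlingFirst, Int.cast_natCast,
    ← mul_div_assoc, eq_div_iff hk, mul_comm]
  exact factorial_mul_coeff_negLogOneSub_pow k n
end
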